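/- arXiv:1611.08826 — 5 statements merged into one kernel-verified Lean document; each statement's English description precedes it below -/
import Mathlib

section
/- Majority criterion for Phragmén's methods: (a) in an unordered election, if more than half of all voters cast the same ballot σ with |σ| ≥ ⌈M/2⌉ (i.e., v_σ > V/2), then every possible outcome E of Phragmén's unordered method for M seats satisfies |E ∩ σ| ≥ ⌈M/2⌉; (b) in an ordered election, if more than half of all voters cast the same ballot α with at least ⌈M/2⌉ entries (i.e., v_α > V/2), then every possible outcome of Phragmén's ordered method for M seats contains the first ⌈M/2⌉ candidates of α. -/
open Finset

/-- The number of ballots containing candidate `i` (as a rational number). -/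
def phVotes {C : Type} [Fintype C] [DecidableEq C] (v : Finset C → ℕ) (i : C) : ℚ :=
  ∑ σ ∈ Finset.univ.filter (fun σ : Finset C => i ∈ σ), (v σ : ℚ)

/-- Phragmén's `t_i = (1 + Σ_{σ∋i} v_σ r_σ)/(Σ_{σ∋i} v_σ)` for the current loads `r`. -/
def phT {C : Type} [Fintype C] [DecidableEq C]
    (v : Finset C → ℕ) (r : Finset C → ℚ) (i : C) : ℚ :=
  (1 + ∑ σ ∈ Finset.univ.filter (fun σ : Finset C => i ∈ σ), (v σ : ℚ) * r σ) / phVotes v i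

/-- The ballot loads after electing the candidates in the list `l`
(most recently elected first); initially all loads are `0`, and when `i` is
elected the load of every ballot containing `i` is set to `t_i`. -/
def phLoads {C : Type} [Fintype C] [DecidableEq C] (v : Finset C → ℕ) :
    List C → Finset C → ℚ
  | [], _ => 0
  | i :: l, σ => if i ∈ σ then phT v (phLoads v l) i else phLoads v l σ

/-- `l` (most recently elected first) is a valid sequence of elections for
Phragmén's unordered method: each newly elected candidate is a not yet elected
candidate with positive vote count minimizing `t_i`. -/
def phValid {C : Type} [Fintype C] [DecidableEq C] (v : Finset C → ℕ) : List C → Prop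
  | [] => True
  | i :: l => phValid v l ∧ i ∉ l ∧ 0 < phVotes v i ∧
      ∀ j : C, j ∉ l → 0 < phVotes v j →
        phT v (phLoads v l) i ≤ phT v (phLoads v l) j

/-- `S` is a possible outcome of Phragmén's unordered method for `M` seats:
its elements can be elected in some order by the rule, ties broken arbitrarily. -/
def PhragmenOutcome {C : Type} [Fintype C] [DecidableEq C]
    (v : Finset C → ℕ) (M : ℕ) (S : Finset C) : Prop :=
  ∃ l : List C, phValid v l ∧ l.length = M ∧ l.toFinset = S

/-- The top candidate of the ballot `α` given the set `E` of already elected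
candidates: the first entry of `α` not in `E` (if any). -/
def topOf {C : Type} [DecidableEq C] (E : Finset C) (α : List C) : Option C :=
  α.find? (fun c => decide (c ∉ E))

/-- The set of voters whose ballot is currently counted for candidate `i`,
given the set `E` of already elected candidates. -/
def poCounted {C : Type} [Fintype C] [DecidableEq C] {n : ℕ}
    (b : Fin n → List C) (E : Finset C) (i : C) : Finset (Fin n) :=
  Finset.univ.filter (fun k => topOf E (b k) = some i)

/-- Phragmén's `t_i = (1 + Σ_{α∈A_i} v_α r_α)/(Σ_{α∈A_i} v_α)` for the current
loads `r` and elected set `E` (each individual ballot has weight 1). -/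
def poT {C : Type} [Fintype C] [DecidableEq C] {n : ℕ}
    (b : Fin n → List C) (r : Fin n → ℚ) (E : Finset C) (i : C) : ℚ :=
  (1 + ∑ k ∈ poCounted b E i, r k) / ((poCounted b E i).card : ℚ)

/-- The ballot loads after electing the candidates in the list `l`
(most recently elected first). -/
def poLoads {C : Type} [Fintype C] [DecidableEq C] {n : ℕ}
    (b : Fin n → List C) : List C → Fin n → ℚ
  | [], _ => 0
  | i :: l, k =>
      if topOf l.toFinset (b k) = some i then poT b (poLoads b l) l.toFinset i
      else poLoads b l k

/-- `l` (most recently elected first) is a valid sequence of elections for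
Phragmén's ordered method. -/
def poValid {C : Type} [Fintype C] [DecidableEq C] {n : ℕ}
    (b : Fin n → List C) : List C → Prop
  | [] => True
  | i :: l => poValid b l ∧ i ∉ l ∧ 0 < (poCounted b l.toFinset i).card ∧
      ∀ j : C, j ∉ l → 0 < (poCounted b l.toFinset j).card →
        poT b (poLoads b l) l.toFinset i ≤ poT b (poLoads b l) l.toFinset j

/-- `S` is a possible outcome of Phragmén's ordered method for `M` seats. -/
def POOutcome {C : Type} [Fintype C] [DecidableEq C] {n : ℕ}
    (b : Fin n → List C) (M : ℕ) (S : Finset C) : Prop :=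
  ∃ l : List C, poValid b l ∧ l.length = M ∧ l.toFinset = S


/-!
Both methods are instances of one scheme: ballots `β` with weights `w β`, a map `S E i` giving
the ballots counted for `i` once `E` is elected, and prices
`t_i = (1 + Σ_{β ∈ S E i} w β r β) / Σ_{β ∈ S E i} w β`. (Unordered: ballot types weighted by `v`,
counted for every candidate they contain. Ordered: single voters of weight `1`, counted for their
top candidate.) If electing `j` only moves ballots from `j` to other candidates, the prices of
successive winners never decrease, so every load is at most the last price; and each election
adds exactly `1` to the total weighted load.

Let `G` be a group of ballots, always counted together, of weight `W > V/2` and common load `q`.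
While `G` still has an unelected candidate, that candidate costs at most `q + 1/W`, hence so does
every winner; so the last price is at most `q + 1/W`, and `W q` never exceeds the number of
candidates `G` has won. Summing the loads,
`M ≤ W q + (V - W) (q + 1/W) < 2 W q + 1 ≤ 2 · (candidates won by G) + 1`.
-/

namespace Phragmen

variable {C B : Type}

def weight (w : B → ℕ) (T : Finset B) : ℚ := ∑ β ∈ T, (w β : ℚ)

def price (w : B → ℕ) (S : Finset C → C → Finset B) (r : B → ℚ) (E : Finset C) (i : C) : ℚ :=
  (1 + ∑ β ∈ S E i, (w β : ℚ) * r β) / weight w (S E i)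

section Weight

variable {w : B → ℕ}

lemma weight_nonneg (T : Finset B) : 0 ≤ weight w T :=
  Finset.sum_nonneg fun _ _ => Nat.cast_nonneg _

lemma weight_one (T : Finset B) : weight 1 T = T.card := by
  simp [weight]

variable [DecidableEq B]

lemma weight_sdiff {T T' : Finset B} (h : T ⊆ T') :
    weight w (T' \ T) = weight w T' - weight w T := by
  rw [weight, weight, weight, ← Finset.sum_sdiff h, add_sub_cancel_right]

lemma weight_mono {T T' : Finset B} (h : T ⊆ T') : weight w T ≤ weight w T' := by
  linarith [weight_sdiff (w := w) h, weight_nonneg (w := w) (T' \ T)]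

lemma sum_le_of_eq_on_subset {G T : Finset B} (hGT : G ⊆ T) {r : B → ℚ} {q Q : ℚ}
    (hq : ∀ β ∈ G, r β = q) (hQ : ∀ β ∈ T, r β ≤ Q) :
    ∑ β ∈ T, (w β : ℚ) * r β ≤ weight w G * q + (weight w T - weight w G) * Q := by
  rw [← Finset.sum_sdiff hGT, ← weight_sdiff hGT, weight, weight, Finset.sum_mul,
    Finset.sum_mul, add_comm]
  gcongr with β hβ β hβ
  · exact (hq β hβ).le
  · exact hQ β (Finset.sdiff_subset hβ)

end Weight

section Price

variable {w : B → ℕ} {S : Finset C → C → Finset B} {r : B → ℚ} {E : Finset C} {i : C}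

lemma price_nonneg (hr : ∀ β, 0 ≤ r β) : 0 ≤ price w S r E i := by
  have : 0 ≤ ∑ β ∈ S E i, (w β : ℚ) * r β :=
    Finset.sum_nonneg fun β _ => mul_nonneg (Nat.cast_nonneg _) (hr β)
  exact div_nonneg (by linarith) (weight_nonneg _)

lemma weight_mul_price (h : 0 < weight w (S E i)) :
    weight w (S E i) * price w S r E i = 1 + ∑ β ∈ S E i, (w β : ℚ) * r β :=
  mul_div_cancel₀ _ h.ne'

lemma le_price_iff (h : 0 < weight w (S E i)) {t : ℚ} :
    t ≤ price w S r E i ↔ t * weight w (S E i) ≤ 1 + ∑ β ∈ S E i, (w β : ℚ) * r β :=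
  le_div_iff₀ h

lemma price_le_of_subset [DecidableEq B] {G : Finset B} (hG : 0 < weight w G) (hGS : G ⊆ S E i)
    {q : ℚ} (hq : ∀ β ∈ G, r β = q) (hr : ∀ β, r β ≤ q + 1 / weight w G) :
    price w S r E i ≤ q + 1 / weight w G := by
  have hpos : 0 < weight w (S E i) := hG.trans_le (weight_mono hGS)
  have hsum := sum_le_of_eq_on_subset (w := w) hGS hq fun β _ => hr β
  have hinv : weight w G * (1 / weight w G) = 1 := mul_one_div_cancel hG.ne'
  rw [price, div_le_iff₀ hpos]
  nlinarith

end Price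

variable [DecidableEq C] [DecidableEq B] (w : B → ℕ) (S : Finset C → C → Finset B)

def loads : List C → B → ℚ
  | [], _ => 0
  | i :: l, β => if β ∈ S l.toFinset i then price w S (loads l) l.toFinset i else loads l β

def lastPrice : List C → ℚ
  | [] => 0
  | i :: l => price w S (loads w S l) l.toFinset i

def IsValid : List C → Prop
  | [] => True
  | i :: l => IsValid l ∧ i ∉ l ∧ 0 < weight w (S l.toFinset i) ∧
      ∀ j, j ∉ l → 0 < weight w (S l.toFinset j) →
        price w S (loads w S l) l.toFinset i ≤ price w S (loads w S l) l.toFinset j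

variable {w S}

structure TransfersFromWinner (S : Finset C → C → Finset B) : Prop where
  subset_insert : ∀ E i j, i ≠ j → S E i ⊆ S (insert j E) i
  insert_subset : ∀ E i j, S (insert j E) i ⊆ S E i ∪ S E j

structure CountsSeatsOf (S : Finset C → C → Finset B) (β₀ : B) (p : Finset C → ℕ) (N : ℕ) :
    Prop where
  mono : ∀ E i, p E ≤ p (insert i E)
  lt_insert : ∀ E i, i ∉ E → β₀ ∈ S E i → p E < p (insert i E)
  exists_of_lt : ∀ E, p E < N → ∃ i ∉ E, β₀ ∈ S E i

@[simp]
lemma loads_nil (β : B) : loads w S [] β = 0 := rfl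

lemma loads_cons (i : C) (l : List C) (β : B) :
    loads w S (i :: l) β = if β ∈ S l.toFinset i then lastPrice w S (i :: l) else loads w S l β :=
  rfl

lemma sum_weight_mul_loads [Fintype B] : ∀ l : List C, IsValid w S l →
    ∑ β, (w β : ℚ) * loads w S l β = l.length
  | [], _ => by simp
  | i :: l, ⟨hl, _, hpos, _⟩ => by
    have hsplit := Finset.sum_filter_add_sum_filter_not Finset.univ
      (· ∈ S l.toFinset i) fun β => (w β : ℚ) * loads w S l β
    simp only [loads_cons, mul_ite, Finset.sum_ite, Finset.filter_mem_eq_inter,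
      Finset.univ_inter] at hsplit ⊢
    rw [← Finset.sum_mul, ← weight, lastPrice, weight_mul_price hpos, List.length_cons,
      Nat.cast_succ, ← sum_weight_mul_loads l hl, ← hsplit]
    ring

lemma lastPrice_le_lastPrice_cons
    (hS : TransfersFromWinner S) {i j : C} {l : List C} (hv : IsValid w S (i :: j :: l))
    (hr₀ : ∀ β, 0 ≤ loads w S l β) (hr : ∀ β, loads w S l β ≤ lastPrice w S (j :: l)) :
    lastPrice w S (j :: l) ≤ lastPrice w S (i :: j :: l) := by
  obtain ⟨⟨-, -, -, hmin⟩, hi, hpos, -⟩ := hv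
  rw [List.mem_cons, not_or] at hi
  rw [List.toFinset_cons] at hpos
  set E := l.toFinset
  set t := lastPrice w S (j :: l)
  have hsub : S E i ⊆ S (insert j E) i := hS.subset_insert E i j hi.1
  have hold : t * weight w (S E i) ≤ 1 + ∑ β ∈ S E i, (w β : ℚ) * loads w S l β := by
    rcases (weight_nonneg (S E i)).eq_or_lt with h0 | hposi
    · rw [← h0, mul_zero]
      have := Finset.sum_nonneg fun β (_ : β ∈ S E i) =>
        mul_nonneg (Nat.cast_nonneg (w β) : (0 : ℚ) ≤ w β) (hr₀ β)
      linarith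
    · exact (le_price_iff hposi).1 (hmin i hi.2 hposi)
  have hnew : ∀ β ∈ S (insert j E) i \ S E i, t ≤ loads w S (j :: l) β := fun β hβ => by
    obtain ⟨hβ', hβi⟩ := Finset.mem_sdiff.1 hβ
    have hβj : β ∈ S E j := (Finset.mem_union.1 (hS.insert_subset E i j hβ')).resolve_left hβi
    rw [loads_cons, if_pos hβj]
  have hgrow : ∀ β, loads w S l β ≤ loads w S (j :: l) β := fun β => by
    rw [loads_cons]
    split_ifs
    exacts [hr β, le_rfl]
  have hnew_sum : weight w (S (insert j E) i \ S E i) * t ≤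
      ∑ β ∈ S (insert j E) i \ S E i, (w β : ℚ) * loads w S (j :: l) β := by
    rw [weight, Finset.sum_mul]
    gcongr with β hβ
    exact hnew β hβ
  have hold_sum : ∑ β ∈ S E i, (w β : ℚ) * loads w S l β ≤
      ∑ β ∈ S E i, (w β : ℚ) * loads w S (j :: l) β := by
    gcongr with β
    exact hgrow β
  have hsplit : t * weight w (S (insert j E) i) =
      weight w (S (insert j E) i \ S E i) * t + t * weight w (S E i) := by
    rw [weight_sdiff hsub]; ring
  rw [lastPrice, List.toFinset_cons, le_price_iff hpos, ← Finset.sum_sdiff hsub]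
  linarith

theorem loads_nonneg_and_le_lastPrice_and_mono
    (hS : TransfersFromWinner S) : ∀ l : List C, IsValid w S l →
    (∀ β, 0 ≤ loads w S l β) ∧ (∀ β, loads w S l β ≤ lastPrice w S l) ∧
      ∀ i, IsValid w S (i :: l) → lastPrice w S l ≤ lastPrice w S (i :: l)
  | [], _ => ⟨fun _ => le_rfl, fun _ => le_rfl, fun _ _ => price_nonneg fun _ => le_rfl⟩
  | j :: l, hv => by
    obtain ⟨h0, hle, hmono⟩ := loads_nonneg_and_le_lastPrice_and_mono hS l hv.1
    have hle' : ∀ β, loads w S l β ≤ lastPrice w S (j :: l) :=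
      fun β => (hle β).trans (hmono j hv)
    refine ⟨fun β => ?_, fun β => ?_,
      fun i hi => lastPrice_le_lastPrice_cons hS hi h0 hle'⟩
    all_goals rw [loads_cons]; split_ifs
    exacts [price_nonneg h0, h0 β, le_rfl, hle' β]

lemma loads_eq_of_mem {G : Finset B} {β₀ : B} (hG : ∀ E i, ∀ β ∈ G, β ∈ S E i ↔ β₀ ∈ S E i)
    {β : B} (hβ : β ∈ G) : ∀ l : List C, loads w S l β = loads w S l β₀
  | [] => rfl
  | i :: l => by simp only [loads_cons, hG _ _ β hβ, loads_eq_of_mem hG hβ l]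

theorem lastPrice_le_and_weight_mul_loads_le
    (hS : TransfersFromWinner S)
    {G : Finset B} {β₀ : B} (hG : ∀ E i, ∀ β ∈ G, β ∈ S E i ↔ β₀ ∈ S E i)
    (hGpos : 0 < weight w G) {p : Finset C → ℕ} {N : ℕ}
    (hp : CountsSeatsOf S β₀ p N) :
    ∀ l : List C, IsValid w S l → p l.toFinset < N →
      lastPrice w S l ≤ loads w S l β₀ + 1 / weight w G ∧
        weight w G * loads w S l β₀ ≤ p l.toFinset
  | [], _, _ => by
    refine ⟨?_, by simp⟩
    simp only [lastPrice, loads_nil, zero_add]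
    positivity
  | i :: l, ⟨hl, hil, _, hmin⟩, hN => by
    rw [List.toFinset_cons] at hN ⊢
    have hNl : p l.toFinset < N := (hp.mono _ i).trans_lt hN
    obtain ⟨ihT, ihq⟩ :=
      lastPrice_le_and_weight_mul_loads_le hS hG hGpos hp l hl hNl
    obtain ⟨-, hle, -⟩ := loads_nonneg_and_le_lastPrice_and_mono hS l hl
    obtain ⟨c, hcl, hc⟩ := hp.exists_of_lt _ hNl
    have hGc : G ⊆ S l.toFinset c := fun β hβ => (hG _ _ β hβ).2 hc
    have hprice : lastPrice w S (i :: l) ≤ loads w S l β₀ + 1 / weight w G := by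
      refine (hmin c (by simpa using hcl) (hGpos.trans_le (weight_mono hGc))).trans ?_
      exact price_le_of_subset hGpos hGc (fun β hβ => loads_eq_of_mem hG hβ l)
        fun β => (hle β).trans ihT
    by_cases hi : β₀ ∈ S l.toFinset i
    · have hinv : weight w G * (1 / weight w G) = 1 := mul_one_div_cancel hGpos.ne'
      have hcount : p l.toFinset + 1 ≤ p (insert i l.toFinset) :=
        hp.lt_insert _ i (by simpa using hil) hi
      rw [loads_cons, if_pos hi]
      refine ⟨by linarith [one_div_pos.2 hGpos], ?_⟩
      have : ((p l.toFinset + 1 : ℕ) : ℚ) ≤ p (insert i l.toFinset) := by exact_mod_cast hcount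
      push_cast at this
      nlinarith [mul_le_mul_of_nonneg_left hprice hGpos.le]
    · rw [loads_cons, if_neg hi]
      exact ⟨hprice, ihq.trans (by exact_mod_cast hp.mono _ i)⟩

theorem length_le_two_mul [Fintype B]
    (hS : TransfersFromWinner S)
    {G : Finset B} {β₀ : B} (hG : ∀ E i, ∀ β ∈ G, β ∈ S E i ↔ β₀ ∈ S E i)
    (hmaj : weight w Finset.univ < 2 * weight w G) {p : Finset C → ℕ} {N : ℕ}
    (hp : CountsSeatsOf S β₀ p N)
    {l : List C} (hl : IsValid w S l) (hN : p l.toFinset < N) :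
    l.length ≤ 2 * p l.toFinset := by
  have hGpos : 0 < weight w G := by linarith [weight_nonneg (w := w) Finset.univ]
  obtain ⟨hT, hq⟩ :=
    lastPrice_le_and_weight_mul_loads_le hS hG hGpos hp l hl hN
  obtain ⟨h0, hle, -⟩ := loads_nonneg_and_le_lastPrice_and_mono hS l hl
  set q := loads w S l β₀
  set Q := q + 1 / weight w G
  have htotal := sum_le_of_eq_on_subset (w := w) (Finset.subset_univ G)
    (fun β hβ => loads_eq_of_mem hG hβ l) fun β _ => (hle β).trans hT
  rw [sum_weight_mul_loads l hl] at htotal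
  have hQ : 0 < Q := by have := h0 β₀; positivity
  have hinv : weight w G * (1 / weight w G) = 1 := mul_one_div_cancel hGpos.ne'
  have hrest : (weight w Finset.univ - weight w G) * Q < weight w G * Q :=
    mul_lt_mul_of_pos_right (by linarith) hQ
  have : (l.length : ℚ) < 2 * p l.toFinset + 1 := by
    simp only [Q, mul_add] at hrest
    linarith
  exact_mod_cast Nat.lt_succ_iff.1 (by exact_mod_cast this)

end Phragmen

open Phragmen

section Unordered

variable {C : Type} [Fintype C] [DecidableEq C]

def ballotsContaining (_E : Finset C) (i : C) : Finset (Finset C) :=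
  Finset.univ.filter fun σ : Finset C => i ∈ σ

lemma phLoads_eq_loads (v : Finset C → ℕ) :
    ∀ l : List C, phLoads v l = loads v ballotsContaining l
  | [] => rfl
  | i :: l => by
    funext σ
    simp only [phLoads, loads, ballotsContaining, Finset.mem_filter, Finset.mem_univ, true_and,
      phLoads_eq_loads v l]
    rfl

lemma isValid_of_phValid (v : Finset C → ℕ) :
    ∀ l : List C, phValid v l → IsValid v ballotsContaining l
  | [], _ => trivial
  | _ :: l, ⟨hl, hil, hpos, hmin⟩ => by
    rw [phLoads_eq_loads] at hmin
    exact ⟨isValid_of_phValid v l hl, hil, hpos, hmin⟩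

lemma transfersFromWinner_ballotsContaining :
    TransfersFromWinner (ballotsContaining (C := C)) :=
  ⟨fun _ _ _ _ => subset_rfl, fun _ _ _ => Finset.subset_union_left⟩

lemma countsSeatsOf_card_inter (σ : Finset C) :
    CountsSeatsOf ballotsContaining σ (fun E => (E ∩ σ).card) σ.card where
  mono E i := Finset.card_le_card (Finset.inter_subset_inter_right (Finset.subset_insert i E))
  lt_insert E i hiE hi := by
    rw [Finset.insert_inter_of_mem (by simpa [ballotsContaining] using hi),
      Finset.card_insert_of_notMem (by simp [hiE])]
    exact Nat.lt_succ_self _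
  exists_of_lt E hE := by
    by_contra! hσE
    refine hE.ne (congrArg Finset.card (Finset.inter_eq_right.2 fun i hi => ?_))
    by_contra hiE
    simpa [ballotsContaining, hi] using hσE i hiE

theorem PhragmenOutcome.le_card_inter {v : Finset C → ℕ} {M : ℕ} {σ E : Finset C}
    (hmaj : ∑ τ, v τ < 2 * v σ) (hσ : (M + 1) / 2 ≤ σ.card) (hE : PhragmenOutcome v M E) :
    (M + 1) / 2 ≤ (E ∩ σ).card := by
  obtain ⟨l, hl, rfl, rfl⟩ := hE
  by_contra! h
  have hmaj' : weight v Finset.univ < 2 * weight v {σ} := by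
    simp only [weight, Finset.sum_singleton]
    exact_mod_cast hmaj
  have := length_le_two_mul transfersFromWinner_ballotsContaining (by simp) hmaj'
    (countsSeatsOf_card_inter σ) (isValid_of_phValid v l hl) (h.trans_le hσ)
  omega

end Unordered

section Ordered

variable {C : Type} [DecidableEq C]

def topIndex (E : Finset C) (α : List C) : ℕ :=
  (α.takeWhile fun c => decide (c ∈ E)).length

lemma topOf_cons (E : Finset C) (c : C) (α : List C) :
    topOf E (c :: α) = if c ∈ E then topOf E α else some c := by
  by_cases h : c ∈ E <;> simp [topOf, h]

lemma topIndex_cons (E : Finset C) (c : C) (α : List C) :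
    topIndex E (c :: α) = if c ∈ E then topIndex E α + 1 else 0 := by
  by_cases h : c ∈ E <;> simp [topIndex, h]

lemma topOf_insert_of_ne {E : Finset C} {i j : C} (hij : i ≠ j) :
    ∀ {α : List C}, topOf E α = some i → topOf (insert j E) α = some i
  | [], h => h
  | c :: α, h => by
    rw [topOf_cons] at h ⊢
    split_ifs at h with hc
    · rw [if_pos (Finset.mem_insert_of_mem hc)]
      exact topOf_insert_of_ne hij h
    · cases h
      rw [if_neg (by simp [hc, hij])]

lemma topOf_insert_eq_some {E : Finset C} {i j : C} :
    ∀ {α : List C}, topOf (insert j E) α = some i → topOf E α = some i ∨ topOf E α = some j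
  | [], h => by simp [topOf] at h
  | c :: α, h => by
    rw [topOf_cons] at h ⊢
    by_cases hc : c ∈ E
    · rw [if_pos (Finset.mem_insert_of_mem hc)] at h
      rw [if_pos hc]
      exact topOf_insert_eq_some h
    · rw [if_neg hc]
      by_cases hcj : c = j
      · exact Or.inr (congrArg some hcj)
      · rw [if_neg (by simp [hc, hcj])] at h
        exact Or.inl h

lemma topIndex_mono {E E' : Finset C} (h : E ⊆ E') : ∀ α : List C, topIndex E α ≤ topIndex E' α
  | [] => le_rfl
  | c :: α => by
    rw [topIndex_cons, topIndex_cons]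
    split_ifs with hc hc'
    · exact Nat.succ_le_succ (topIndex_mono h α)
    · exact absurd (h hc) hc'
    all_goals omega

lemma topIndex_lt_topIndex_insert {E : Finset C} {i : C} :
    ∀ {α : List C}, topOf E α = some i → topIndex E α < topIndex (insert i E) α
  | [], h => by simp [topOf] at h
  | c :: α, h => by
    rw [topOf_cons] at h
    rw [topIndex_cons, topIndex_cons]
    by_cases hc : c ∈ E
    · rw [if_pos hc] at h
      rw [if_pos hc, if_pos (Finset.mem_insert_of_mem hc)]
      exact Nat.succ_lt_succ (topIndex_lt_topIndex_insert h)
    · rw [if_neg hc, Option.some_inj] at h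
      rw [if_neg hc, if_pos (h ▸ Finset.mem_insert_self c E)]
      exact Nat.succ_pos _

lemma exists_topOf_eq_some {E : Finset C} :
    ∀ {α : List C}, topIndex E α < α.length → ∃ i ∉ E, topOf E α = some i
  | [], h => by simp [topIndex] at h
  | c :: α, h => by
    rw [topIndex_cons, List.length_cons] at h
    rw [topOf_cons]
    split_ifs at h ⊢ with hc
    · exact exists_topOf_eq_some (by omega)
    · exact ⟨c, hc, rfl⟩

lemma take_subset_of_le_topIndex {E : Finset C} :
    ∀ {α : List C} {m : ℕ}, m ≤ topIndex E α → (α.take m).toFinset ⊆ E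
  | _, 0, _ => by simp
  | [], _ + 1, _ => by simp
  | c :: α, m + 1, h => by
    rw [topIndex_cons] at h
    split_ifs at h with hc
    · rw [List.take_succ_cons, List.toFinset_cons]
      exact Finset.insert_subset hc (take_subset_of_le_topIndex (by omega))
    · omega

variable [Fintype C] {n : ℕ}

lemma poT_eq_price (b : Fin n → List C) (r : Fin n → ℚ) (E : Finset C) (i : C) :
    poT b r E i = price 1 (poCounted b) r E i := by
  simp [poT, price, weight]

@[simp]
lemma mem_poCounted (b : Fin n → List C) {E : Finset C} {i : C} {k : Fin n} :
    k ∈ poCounted b E i ↔ topOf E (b k) = some i := by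
  simp [poCounted]

lemma transfersFromWinner_poCounted (b : Fin n → List C) : TransfersFromWinner (poCounted b) where
  subset_insert _ _ _ hij _ hk := by simpa using topOf_insert_of_ne hij (by simpa using hk)
  insert_subset _ _ _ _ hk := by simpa using topOf_insert_eq_some (by simpa using hk)

lemma countsSeatsOf_topIndex {b : Fin n → List C} {α : List C} {k₀ : Fin n} (hk₀ : b k₀ = α) :
    CountsSeatsOf (poCounted b) k₀ (fun E => topIndex E α) α.length where
  mono E i := topIndex_mono (Finset.subset_insert i E) α
  lt_insert _ _ _ hi := topIndex_lt_topIndex_insert (by simpa [hk₀] using hi)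
  exists_of_lt _ hE := by simpa [hk₀] using exists_topOf_eq_some hE

lemma poLoads_eq_loads (b : Fin n → List C) :
    ∀ l : List C, poLoads b l = loads 1 (poCounted b) l
  | [] => rfl
  | i :: l => by
    funext k
    simp only [poLoads, loads, mem_poCounted, poT_eq_price, poLoads_eq_loads b l]

lemma isValid_of_poValid (b : Fin n → List C) :
    ∀ l : List C, poValid b l → IsValid 1 (poCounted b) l
  | [], _ => trivial
  | _ :: l, ⟨hl, hil, hpos, hmin⟩ => by
    simp only [poT_eq_price, poLoads_eq_loads] at hmin
    refine ⟨isValid_of_poValid b l hl, hil, by simpa [weight_one] using hpos, fun j hj hposj => ?_⟩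
    exact hmin j hj (by simpa [weight_one] using hposj)

theorem POOutcome.take_subset {b : Fin n → List C} {M : ℕ} {α : List C} {E : Finset C}
    (hα : (M + 1) / 2 ≤ α.length)
    (hmaj : n < 2 * (Finset.univ.filter fun k : Fin n => b k = α).card)
    (hE : POOutcome b M E) : (α.take ((M + 1) / 2)).toFinset ⊆ E := by
  obtain ⟨l, hl, rfl, rfl⟩ := hE
  set A := Finset.univ.filter fun k : Fin n => b k = α
  obtain ⟨k₀, hk₀⟩ : A.Nonempty := Finset.card_pos.1 (by omega)
  have hbk₀ : b k₀ = α := (Finset.mem_filter.1 hk₀).2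
  have hmaj' : weight (1 : Fin n → ℕ) Finset.univ < 2 * weight 1 A := by
    simp only [weight_one, Finset.card_univ, Fintype.card_fin]
    exact_mod_cast hmaj
  refine take_subset_of_le_topIndex ?_
  by_contra! h
  have := length_le_two_mul (transfersFromWinner_poCounted b)
    (fun E i k hk => by simp [hbk₀, (Finset.mem_filter.1 hk).2]) hmaj'
    (countsSeatsOf_topIndex hbk₀) (isValid_of_poValid b l hl) (h.trans_le hα)
  omega

end Ordered

/-- Majority criterion for Phragmén's methods.
(a) Unordered: if more than half of all voters cast the same ballot `σ` with
`|σ| ≥ ⌈M/2⌉`, then every possible outcome `E` of Phragmén's unordered method for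
`M` seats satisfies `|E ∩ σ| ≥ ⌈M/2⌉`.
(b) Ordered: if more than half of all voters cast the same ballot `α` with at
least `⌈M/2⌉` entries, then every possible outcome of Phragmén's ordered method
for `M` seats contains the first `⌈M/2⌉` candidates of `α`.
(Here `⌈M/2⌉ = (M+1)/2` with natural division.) -/
theorem stmt_15 :
    (∀ (C : Type) [Fintype C] [DecidableEq C] (v : Finset C → ℕ) (M : ℕ)
        (σ : Finset C), v ∅ = 0 → 1 ≤ M → M ≤ Fintype.card C →
        (M + 1) / 2 ≤ σ.card →
        (∑ τ : Finset C, v τ) < 2 * v σ →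
        ∀ E : Finset C, PhragmenOutcome v M E → (M + 1) / 2 ≤ (E ∩ σ).card)
    ∧ (∀ (C : Type) [Fintype C] [DecidableEq C] (n : ℕ) (b : Fin n → List C)
        (M : ℕ) (α : List C), (∀ k, (b k).Nodup) → (∀ k, b k ≠ []) → α.Nodup →
        1 ≤ M → M ≤ Fintype.card C →
        (M + 1) / 2 ≤ α.length →
        n < 2 * (Finset.univ.filter fun k : Fin n => b k = α).card →
        ∀ E : Finset C, POOutcome b M E → (α.take ((M + 1) / 2)).toFinset ⊆ E) :=
  ⟨fun _ _ _ _ _ _ _ _ _ hσ hmaj _ hE => hE.le_card_inter hmaj hσ,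
    fun _ _ _ _ _ _ _ _ _ _ _ _ hα hmaj _ hE => hE.take_subset hα hmaj⟩
end

section
/- Thiele's optimization method with the proportional satisfaction function f(n) = Σ_{k=1}^n 1/k (Proportional Approval Voting) satisfies EJR: for every profile, every number M of seats, and every possible outcome E, E provides EJR. -/
set_option maxHeartbeats 1000000


open Finset

/-- Total satisfaction `F(S) = Σ_σ v_σ · f(|σ ∩ S|)`. -/
noncomputable def thieleF {C : Type} [Fintype C] [DecidableEq C]
    (f : ℕ → ℝ) (v : Finset C → ℕ) (S : Finset C) : ℝ :=
  ∑ σ : Finset C, (v σ : ℝ) * f ((σ ∩ S).card)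

/-- `S` is a possible outcome of Thiele's optimization method with satisfaction
function `f` for `M` seats. -/
def ThieleOptOutcome {C : Type} [Fintype C] [DecidableEq C]
    (f : ℕ → ℝ) (v : Finset C → ℕ) (M : ℕ) (S : Finset C) : Prop :=
  S.card = M ∧ ∀ T : Finset C, T.card = M → thieleF f v T ≤ thieleF f v S

/-- The proportional satisfaction function `f(n) = Σ_{k=1}^n 1/k`. -/
noncomputable def harm (n : ℕ) : ℝ := ∑ k ∈ Finset.range n, (1 : ℝ) / (k + 1)

/-- The outcome `E` (for `M` seats) provides PJR (proportional justified
representation): for every `1 ≤ ℓ ≤ M` and every sub-multiset `g ≤ v` of the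
ballots with `|A| ≥ (ℓ/M)·V` whose ballots have at least `ℓ` candidates in common,
at least `ℓ` candidates appearing on some ballot of the group are elected. -/
def ProvidesPJR {C : Type} [Fintype C] [DecidableEq C]
    (v : Finset C → ℕ) (M : ℕ) (E : Finset C) : Prop :=
  ∀ (ℓ : ℕ) (g : Finset C → ℕ), 1 ≤ ℓ → ℓ ≤ M → (∀ σ, g σ ≤ v σ) →
    (ℓ : ℚ) * (∑ σ : Finset C, (v σ : ℚ)) ≤ (M : ℚ) * (∑ σ : Finset C, (g σ : ℚ)) →
    (∃ T : Finset C, ℓ ≤ T.card ∧ ∀ σ : Finset C, 0 < g σ → T ⊆ σ) →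
    ℓ ≤ (E ∩ (Finset.univ.filter fun σ : Finset C => 0 < g σ).biUnion id).card

/-- The outcome `E` (for `M` seats) provides EJR (extended justified
representation): for every `1 ≤ ℓ ≤ M` and every sub-multiset `g ≤ v` of the
ballots with `|A| ≥ (ℓ/M)·V` whose ballots have at least `ℓ` candidates in common,
some ballot of the group contains at least `ℓ` elected candidates. -/
def ProvidesEJR {C : Type} [Fintype C] [DecidableEq C]
    (v : Finset C → ℕ) (M : ℕ) (E : Finset C) : Prop :=
  ∀ (ℓ : ℕ) (g : Finset C → ℕ), 1 ≤ ℓ → ℓ ≤ M → (∀ σ, g σ ≤ v σ) →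
    (ℓ : ℚ) * (∑ σ : Finset C, (v σ : ℚ)) ≤ (M : ℚ) * (∑ σ : Finset C, (g σ : ℚ)) →
    (∃ T : Finset C, ℓ ≤ T.card ∧ ∀ σ : Finset C, 0 < g σ → T ⊆ σ) →
    ∃ σ : Finset C, 0 < g σ ∧ ℓ ≤ (σ ∩ E).card

lemma harm_succ (n : ℕ) : harm (n+1) = harm n + 1/(n+1) := by
  simp [harm, Finset.sum_range_succ]

lemma ndiv_le_one (n m : ℕ) (h : n ≤ m) : (n:ℝ)/m ≤ 1 := by
  rcases Nat.eq_zero_or_pos m with h0|h0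
  · have : n = 0 := by omega
    simp [this, h0]
  · rw [div_le_one (by exact_mod_cast h0)]; exact_mod_cast h

lemma thieleF_insert {C : Type} [Fintype C] [DecidableEq C]
    (v : Finset C → ℕ) (S : Finset C) (c : C) (hc : c ∉ S) :
    thieleF harm v (insert c S) =
      thieleF harm v S +
        ∑ σ : Finset C, (v σ : ℝ) * (if c ∈ σ then 1/(((σ ∩ S).card : ℝ)+1) else 0) := by
  unfold thieleF
  rw [← Finset.sum_add_distrib]
  refine Finset.sum_congr rfl fun σ _ => ?_
  by_cases hcσ : c ∈ σ
  · have h2 : c ∉ σ ∩ S := by simp [hc]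
    rw [Finset.inter_insert_of_mem hcσ, Finset.card_insert_of_notMem h2, harm_succ,
      if_pos hcσ]
    ring
  · rw [Finset.inter_insert_of_notMem hcσ, if_neg hcσ]
    ring

/-- Thiele's optimization method with the proportional satisfaction function
(Proportional Approval Voting) satisfies EJR: every possible outcome provides EJR. -/
theorem stmt_16 {C : Type} [Fintype C] [DecidableEq C]
    (v : Finset C → ℕ) (hv0 : v ∅ = 0)
    (M : ℕ) (hM1 : 1 ≤ M) (hM2 : M ≤ Fintype.card C)
    (hV : 0 < ∑ σ : Finset C, v σ)
    (E : Finset C) (hE : ThieleOptOutcome harm v M E) :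
    ProvidesEJR v M E := by
  obtain ⟨hEcard, hEopt⟩ := hE
  intro ℓ g hℓ1 hℓM hgv hquota hT
  obtain ⟨T, hTcard, hTsub⟩ := hT
  by_contra hcon
  push_neg at hcon
  -- hcon : ∀ σ, 0 < g σ → (σ ∩ E).card < ℓ
  set V := ∑ σ : Finset C, v σ with hVdef
  set G := ∑ σ : Finset C, g σ with hGdef
  have hquotaN : ℓ * V ≤ M * G := by exact_mod_cast hquota
  have hGpos : 0 < G := by
    rcases Nat.eq_zero_or_pos G with h|h
    · exfalso
      rw [h, Nat.mul_zero] at hquotaN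
      have h1 : 0 < ℓ * V := Nat.mul_pos hℓ1 hV
      omega
    · exact h
  have hσ0 : ∃ σ, 0 < g σ := by
    by_contra h
    push_neg at h
    have : G = 0 := Finset.sum_eq_zero fun σ _ => by have := h σ; omega
    omega
  obtain ⟨σ0, hσ0⟩ := hσ0
  have hTE : ¬ T ⊆ E := by
    intro hsub
    have hsub2 : T ⊆ σ0 ∩ E := Finset.subset_inter (hTsub σ0 hσ0) hsub
    have := Finset.card_le_card hsub2
    have := hcon σ0 hσ0
    omega
  obtain ⟨c, hcT, hcE⟩ := Finset.not_subset.mp hTE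
  have hcσ : ∀ σ, 0 < g σ → c ∈ σ := fun σ h => hTsub σ h hcT
  set W' := insert c E with hW'def
  have hW'card : W'.card = M + 1 := by
    rw [hW'def, Finset.card_insert_of_notMem hcE, hEcard]
  have hℓpos : (0:ℝ) < ℓ := by exact_mod_cast hℓ1
  have hMpos : (0:ℝ) < M := by exact_mod_cast hM1
  have hGposR : (0:ℝ) < G := by exact_mod_cast hGpos
  -- Gain of adding c to E
  set Gain : ℝ := ∑ σ : Finset C, (v σ : ℝ) * (if c ∈ σ then 1/(((σ ∩ E).card : ℝ)+1) else 0)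
    with hGaindef
  have hFW' : thieleF harm v W' = thieleF harm v E + Gain := thieleF_insert v E c hcE
  have hGainGe : (G:ℝ)/ℓ ≤ Gain := by
    rw [hGaindef, hGdef]
    push_cast
    rw [Finset.sum_div]
    refine Finset.sum_le_sum fun σ _ => ?_
    rcases Nat.eq_zero_or_pos (g σ) with h|h
    · rw [h]
      push_cast
      rw [zero_div]
      positivity
    · rw [if_pos (hcσ σ h)]
      have h1 : (σ ∩ E).card + 1 ≤ ℓ := by have := hcon σ h; omega
      rw [mul_one_div]
      apply div_le_div₀ (by positivity) (by exact_mod_cast hgv σ) (by positivity)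
      exact_mod_cast h1
  -- Loss of removing w from W'
  set Loss : C → ℝ := fun w => ∑ σ : Finset C,
      (v σ : ℝ) * (if w ∈ σ then 1/(((σ ∩ (W'.erase w)).card : ℝ)+1) else 0) with hLossdef
  have hLoss : ∀ w ∈ W', thieleF harm v W' = thieleF harm v (W'.erase w) + Loss w := by
    intro w hw
    have h := thieleF_insert v (W'.erase w) w (Finset.notMem_erase w W')
    rw [Finset.insert_erase hw] at h
    exact h
  -- sum of losses over E is at most V - G/ℓ
  have hsum : ∑ w ∈ E, Loss w ≤ (V:ℝ) - (G:ℝ)/ℓ := by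
    have hrw : ∀ w ∈ E, Loss w =
        ∑ σ : Finset C, (if w ∈ σ then (v σ : ℝ) * (1/((σ ∩ W').card : ℝ)) else 0) := by
      intro w hw
      rw [hLossdef]
      refine Finset.sum_congr rfl fun σ _ => ?_
      by_cases hwσ : w ∈ σ
      · rw [if_pos hwσ, if_pos hwσ]
        have hwW' : w ∈ W' := Finset.mem_insert_of_mem hw
        have hmem : w ∈ σ ∩ W' := Finset.mem_inter.mpr ⟨hwσ, hwW'⟩
        have h1 : σ ∩ W'.erase w = (σ ∩ W').erase w := by
          ext x; simp only [Finset.mem_inter, Finset.mem_erase]; tauto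
        have h2 : ((σ ∩ W'.erase w).card : ℝ) + 1 = ((σ ∩ W').card : ℝ) := by
          rw [h1, Finset.card_erase_of_mem hmem]
          have : 1 ≤ (σ ∩ W').card := Finset.card_pos.mpr ⟨w, hmem⟩
          push_cast [Nat.cast_sub this]
          ring
        rw [h2]
      · rw [if_neg hwσ, if_neg hwσ, mul_zero]
    calc ∑ w ∈ E, Loss w
        = ∑ σ : Finset C, ∑ w ∈ E,
            (if w ∈ σ then (v σ : ℝ) * (1/((σ ∩ W').card : ℝ)) else 0) := by
          rw [Finset.sum_congr rfl hrw, Finset.sum_comm]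
      _ = ∑ σ : Finset C, ((E ∩ σ).card : ℝ) * ((v σ : ℝ) * (1/((σ ∩ W').card : ℝ))) := by
          refine Finset.sum_congr rfl fun σ _ => ?_
          rw [Finset.sum_ite_mem, Finset.sum_const, nsmul_eq_mul]
      _ ≤ ∑ σ : Finset C, ((v σ : ℝ) - (g σ : ℝ)/ℓ) := by
          refine Finset.sum_le_sum fun σ _ => ?_
          have hEσ : E ∩ σ ⊆ σ ∩ W' := by
            intro x hx
            simp only [Finset.mem_inter] at hx ⊢
            exact ⟨hx.2, Finset.mem_insert_of_mem hx.1⟩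
          have hcard : (E ∩ σ).card ≤ (σ ∩ W').card := Finset.card_le_card hEσ
          rcases Nat.eq_zero_or_pos (g σ) with h|h
          · rw [h]
            push_cast
            rw [zero_div, sub_zero]
            have h1 : ((E ∩ σ).card : ℝ)/((σ ∩ W').card) ≤ 1 :=
              ndiv_le_one _ _ hcard
            have h2 : (0:ℝ) ≤ v σ := by positivity
            calc ((E ∩ σ).card : ℝ) * ((v σ : ℝ) * (1/((σ ∩ W').card : ℝ)))
                = (v σ : ℝ) * (((E ∩ σ).card : ℝ)/((σ ∩ W').card)) := by ring
              _ ≤ (v σ : ℝ) * 1 := mul_le_mul_of_nonneg_left h1 h2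
              _ = (v σ : ℝ) := mul_one _
          · -- group ballot: c ∈ σ, so |σ ∩ W'| = |σ ∩ E| + 1 ≤ ℓ
            have hcmem : c ∈ σ := hcσ σ h
            have hσW' : σ ∩ W' = insert c (σ ∩ E) := by
              rw [hW'def, Finset.inter_insert_of_mem hcmem]
            have hcnot : c ∉ σ ∩ E := by simp [hcE]
            have hcardW' : (σ ∩ W').card = (σ ∩ E).card + 1 := by
              rw [hσW', Finset.card_insert_of_notMem hcnot]
            have hEσcard : (E ∩ σ).card = (σ ∩ E).card := by rw [Finset.inter_comm]
            obtain ⟨n, hndef⟩ : ∃ n, (σ ∩ E).card = n := ⟨_, rfl⟩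
            rw [hndef] at hcardW'
            have hn1 : n + 1 ≤ ℓ := by have := hcon σ h; omega
            have hn1pos : (0:ℝ) < (n:ℝ) + 1 := by positivity
            have hgvσ : (g σ : ℝ) ≤ (v σ : ℝ) := by exact_mod_cast hgv σ
            have hgnn : (0:ℝ) ≤ g σ := by positivity
            rw [hEσcard, hndef, hcardW']
            push_cast
            have key : (n:ℝ) * ((v σ : ℝ) * (1/((n:ℝ)+1))) = (v σ : ℝ) - (v σ : ℝ)/((n:ℝ)+1) := by
              field_simp
              ring
            rw [key]
            have h3 : (g σ : ℝ)/ℓ ≤ (g σ : ℝ)/((n:ℝ)+1) := by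
              apply div_le_div_of_nonneg_left hgnn hn1pos
              exact_mod_cast hn1
            have h4 : (g σ : ℝ)/((n:ℝ)+1) ≤ (v σ : ℝ)/((n:ℝ)+1) :=
              div_le_div_of_nonneg_right hgvσ hn1pos.le
            linarith
      _ = (V:ℝ) - (G:ℝ)/ℓ := by
          rw [Finset.sum_sub_distrib, ← Finset.sum_div, hVdef, hGdef]
          push_cast
          ring
  -- there is a seat with small loss
  have hEne : E.Nonempty := Finset.card_pos.mp (by omega)
  have hmin : ∃ w ∈ E, Loss w ≤ ((V:ℝ) - (G:ℝ)/ℓ)/M := by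
    apply Finset.exists_le_of_sum_le hEne
    rw [Finset.sum_const, hEcard, nsmul_eq_mul]
    rw [mul_div_cancel₀ _ (ne_of_gt hMpos)]
    exact hsum
  obtain ⟨w, hwE, hwLoss⟩ := hmin
  have hwW' : w ∈ W' := Finset.mem_insert_of_mem hwE
  set S := W'.erase w with hSdef
  have hScard : S.card = M := by
    rw [hSdef, Finset.card_erase_of_mem hwW', hW'card]
    omega
  have hle : thieleF harm v S ≤ thieleF harm v E := hEopt S hScard
  have hFS : thieleF harm v W' = thieleF harm v S + Loss w := hLoss w hwW'
  have hGL : Gain ≤ Loss w := by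
    have := hFW'.symm.trans hFS
    linarith
  have h1 : (G:ℝ)/ℓ ≤ ((V:ℝ) - (G:ℝ)/ℓ)/M := le_trans hGainGe (le_trans hGL hwLoss)
  rw [div_le_div_iff₀ hℓpos hMpos] at h1
  have e1 : ((V:ℝ) - (G:ℝ)/ℓ)*ℓ = (V:ℝ)*ℓ - G := by
    field_simp
  have hVG : (ℓ:ℝ)*V ≤ (M:ℝ)*G := by exact_mod_cast hquotaN
  rw [e1] at h1
  nlinarith
end

section
/- Let f(n) = Σ_{k=1}^n w_k be a satisfaction function with w_1 = 1 and w_k ≥ 0 for all k. Thiele's optimization method with satisfaction function f satisfies JR (i.e., every possible outcome on every profile provides JR) if and only if w_j ≤ 1/j for every j > 1. -/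
open Finset

/-- The satisfaction function `f(n) = Σ_{k=1}^n w_k` built from the weights `w`. -/
noncomputable def fromWeights (w : ℕ → ℝ) (n : ℕ) : ℝ := ∑ k ∈ Finset.Icc 1 n, w k

/-- The outcome `E` (for `M` seats) provides JR (justified representation):
for every sub-multiset `g ≤ v` of the ballots with `|A| ≥ V/M` all of whose
ballots share a common candidate, some candidate appearing on some ballot of the
group is elected. -/
def ProvidesJR {C : Type} [Fintype C] [DecidableEq C]
    (v : Finset C → ℕ) (M : ℕ) (E : Finset C) : Prop :=
  ∀ g : Finset C → ℕ, (∀ σ, g σ ≤ v σ) →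
    (∑ σ : Finset C, (v σ : ℚ)) ≤ (M : ℚ) * (∑ σ : Finset C, (g σ : ℚ)) →
    (∃ c : C, ∀ σ : Finset C, 0 < g σ → c ∈ σ) →
    ∃ c ∈ E, ∃ σ : Finset C, 0 < g σ ∧ c ∈ σ

lemma fW_zero (w : ℕ → ℝ) : fromWeights w 0 = 0 := by simp [fromWeights]

lemma fW_succ (w : ℕ → ℝ) (n : ℕ) :
    fromWeights w (n + 1) = fromWeights w n + w (n + 1) := by
  unfold fromWeights
  rw [← Finset.sum_Icc_succ_top (by omega)]

lemma fW_one (w : ℕ → ℝ) (hw1 : w 1 = 1) : fromWeights w 1 = 1 := by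
  simp [fromWeights, hw1]

lemma fW_nonneg (w : ℕ → ℝ) (hw : ∀ k, 0 ≤ w k) (n : ℕ) : 0 ≤ fromWeights w n :=
  Finset.sum_nonneg fun k _ => hw k

lemma fW_mono (w : ℕ → ℝ) (hw : ∀ k, 0 ≤ w k) : Monotone (fromWeights w) := by
  intro m n hmn
  exact Finset.sum_le_sum_of_subset_of_nonneg (Finset.Icc_subset_Icc_right hmn)
    (fun k _ _ => hw k)

lemma fW_pred (w : ℕ → ℝ) (n : ℕ) (hn : 1 ≤ n) :
    fromWeights w (n - 1) = fromWeights w n - w n := by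
  obtain ⟨m, rfl⟩ := Nat.exists_eq_add_of_le hn
  simp only [Nat.add_sub_cancel_left]
  rw [show 1 + m = m + 1 by omega, fW_succ]
  ring

lemma key_ew (w : ℕ → ℝ) (hw1 : w 1 = 1) (hw : ∀ k, 0 ≤ w k)
    (hj : ∀ j : ℕ, 1 < j → w j ≤ 1 / (j : ℝ)) (e e' : ℕ) (he : 1 ≤ e) (hee : e ≤ e') :
    (e : ℝ) * w e' ≤ 1 := by
  rcases Nat.lt_or_ge 1 e' with h | h
  · calc (e : ℝ) * w e' ≤ (e' : ℝ) * w e' := by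
          apply mul_le_mul_of_nonneg_right _ (hw e')
          exact_mod_cast hee
      _ ≤ (e' : ℝ) * (1 / e') := by
          apply mul_le_mul_of_nonneg_left (hj e' h) (by positivity)
      _ = 1 := by
          have : (0:ℝ) < e' := by exact_mod_cast (by omega : 0 < e')
          field_simp
  · have he' : e' = 1 := by omega
    have : e = 1 := by omega
    simp [this, he', hw1]

lemma sufficiency (w : ℕ → ℝ) (hw1 : w 1 = 1) (hw : ∀ k, 0 ≤ w k)
    (hj : ∀ j : ℕ, 1 < j → w j ≤ 1 / (j : ℝ))
    {C : Type} [Fintype C] [DecidableEq C] (v : Finset C → ℕ) (M : ℕ) (E : Finset C)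
    (hV : 0 < ∑ σ : Finset C, v σ)
    (hopt : ThieleOptOutcome (fromWeights w) v M E) : ProvidesJR v M E := by
  obtain ⟨hcard, hopt⟩ := hopt
  set f := fromWeights w with hf
  have hf0 : f 0 = 0 := fW_zero w
  have hf1 : f 1 = 1 := fW_one w hw1
  have hfnn : ∀ n, 0 ≤ f n := fW_nonneg w hw
  have hfmono : ∀ {m n : ℕ}, m ≤ n → f m ≤ f n := fun h => fW_mono w hw h
  have hfpred : ∀ n, 1 ≤ n → f (n - 1) = f n - w n := fun n h => fW_pred w n h
  rintro g hg hVG ⟨c, hc⟩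
  by_contra hcon
  push_neg at hcon
  -- hcon : ∀ c ∈ E, ∀ σ, 0 < g σ → c ∉ σ
  have hVG' : (∑ σ : Finset C, v σ) ≤ M * ∑ σ : Finset C, g σ := by exact_mod_cast hVG
  have hG : 0 < ∑ σ : Finset C, g σ := by
    rcases Nat.eq_zero_or_pos (∑ σ : Finset C, g σ) with h | h
    · rw [h] at hVG'; omega
    · exact h
  obtain ⟨σ₀, hσ₀⟩ : ∃ σ, 0 < g σ := by
    by_contra h
    push_neg at h
    have : (∑ σ : Finset C, g σ) = 0 := Finset.sum_eq_zero fun σ _ => by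
      have := h σ; omega
    omega
  have hcE : c ∉ E := fun h => hcon c h σ₀ hσ₀ (hc σ₀ hσ₀)
  have hdisj : ∀ σ, 0 < g σ → σ ∩ E = ∅ := fun σ hσ =>
    Finset.eq_empty_of_forall_notMem fun x hx =>
      hcon x (Finset.mem_inter.mp hx).2 σ hσ (Finset.mem_inter.mp hx).1
  set E' := insert c E with hE'def
  have hE' : E'.card = M + 1 := by
    rw [hE'def, Finset.card_insert_of_notMem hcE, hcard]
  have hTcard : ∀ y ∈ E, (E'.erase y).card = M := by
    intro y hy
    rw [Finset.card_erase_of_mem (Finset.mem_insert_of_mem hy), hE']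
    omega
  have hA : ∀ σ : Finset C, (σ ∩ E').card = (σ ∩ E).card + (if c ∈ σ then 1 else 0) := by
    intro σ
    have hrw : σ ∩ E' = if c ∈ σ then insert c (σ ∩ E) else σ ∩ E := by
      split_ifs with h <;> ext x <;>
        simp only [hE'def, Finset.mem_inter, Finset.mem_insert] <;>
        constructor <;> intro hx
      · tauto
      · rcases hx with rfl | hx
        · exact ⟨h, Or.inl rfl⟩
        · tauto
      · rcases hx with ⟨hx1, rfl | hx2⟩
        · exact absurd hx1 h
        · exact ⟨hx1, hx2⟩
      · tauto
    rw [hrw]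
    split_ifs with h
    · rw [Finset.card_insert_of_notMem (fun hx => hcE (Finset.mem_inter.mp hx).2)]
    · omega
  have hB : ∀ σ : Finset C, ∀ y ∈ E,
      (σ ∩ E'.erase y).card = (σ ∩ E').card - (if y ∈ σ then 1 else 0) := by
    intro σ y hy
    have hrw : σ ∩ E'.erase y = (σ ∩ E').erase y := by
      ext x
      simp only [Finset.mem_inter, Finset.mem_erase]
      tauto
    rw [hrw]
    split_ifs with h
    · rw [Finset.card_erase_of_mem (Finset.mem_inter.mpr ⟨h, Finset.mem_insert_of_mem hy⟩)]
    · rw [Finset.erase_eq_of_notMem (fun hx => h (Finset.mem_inter.mp hx).1)]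
      omega
  -- per-sigma key inequality
  have hkey : ∀ σ : Finset C,
      (M:ℝ) * f ((σ ∩ E).card)
        + ((M:ℝ) * (if 0 < g σ then 1 else 0) - (if 1 ≤ (σ ∩ E).card then 1 else 0))
      ≤ ∑ y ∈ E, f ((σ ∩ E'.erase y).card) := by
    intro σ
    by_cases hgσ : 0 < g σ
    · have heq : σ ∩ E = ∅ := hdisj σ hgσ
      have he0 : (σ ∩ E).card = 0 := by rw [heq]; simp
      have hcσ : c ∈ σ := hc σ hgσ
      have he'1 : (σ ∩ E').card = 1 := by rw [hA, he0, if_pos hcσ]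
      have hall : ∀ y ∈ E, (σ ∩ E'.erase y).card = 1 := by
        intro y hy
        rw [hB σ y hy, he'1]
        have hys : y ∉ σ := by
          intro hys
          have : y ∈ σ ∩ E := Finset.mem_inter.mpr ⟨hys, hy⟩
          rw [heq] at this
          exact absurd this (Finset.notMem_empty y)
        rw [if_neg hys]
      rw [Finset.sum_congr rfl (fun y hy => by rw [hall y hy])]
      rw [Finset.sum_const, hcard, he0, hf0, if_pos hgσ, nsmul_eq_mul, hf1]
      have : ¬ (1 ≤ 0) := by omega
      rw [if_neg this]
      ring_nf
      norm_num
    · rw [if_neg hgσ]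
      by_cases he : 1 ≤ (σ ∩ E).card
      · have heM : (σ ∩ E).card ≤ M := by
          rw [← hcard]
          exact Finset.card_le_card Finset.inter_subset_right
        have hee : (σ ∩ E).card ≤ (σ ∩ E').card := by
          rw [hA]; split_ifs <;> omega
        have he'1 : 1 ≤ (σ ∩ E').card := le_trans he hee
        have hsum : ∑ y ∈ E, f ((σ ∩ E'.erase y).card)
            = ∑ y ∈ E, (if y ∈ σ then f ((σ ∩ E').card - 1) else f ((σ ∩ E').card)) := by
          apply Finset.sum_congr rfl
          intro y hy
          rw [hB σ y hy]
          split_ifs with h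
          · rfl
          · rw [Nat.sub_zero]
        rw [hsum, Finset.sum_ite, Finset.sum_const, Finset.sum_const]
        have hc1 : (E.filter (fun y => y ∈ σ)).card = (σ ∩ E).card := by
          rw [Finset.filter_mem_eq_inter, Finset.inter_comm]
        have hc2 : (E.filter (fun y => ¬ y ∈ σ)).card = M - (σ ∩ E).card := by
          have := Finset.card_filter_add_card_filter_not
            (s := E) (p := fun y => y ∈ σ)
          omega
        rw [hc1, hc2, nsmul_eq_mul, nsmul_eq_mul, hfpred _ he'1]
        rw [if_pos he]
        have hcast : ((M - (σ ∩ E).card : ℕ) : ℝ) = (M:ℝ) - ((σ ∩ E).card : ℝ) := by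
          rw [Nat.cast_sub heM]
        rw [hcast]
        have hmono : f ((σ ∩ E).card) ≤ f ((σ ∩ E').card) := hfmono hee
        have hkw : ((σ ∩ E).card : ℝ) * w ((σ ∩ E').card) ≤ 1 :=
          key_ew w hw1 hw hj _ _ he hee
        have hMf : (M:ℝ) * f ((σ ∩ E).card) ≤ (M:ℝ) * f ((σ ∩ E').card) :=
          mul_le_mul_of_nonneg_left hmono (by positivity)
        nlinarith [hMf, hkw]
      · have he0 : (σ ∩ E).card = 0 := by omega
        rw [if_neg he, he0, hf0]
        have : (M:ℝ) * 0 + ((M:ℝ) * 0 - 0) = 0 := by ring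
        rw [this]
        exact Finset.sum_nonneg fun y _ => hfnn _
  -- global combination
  have hswap : ∑ y ∈ E, thieleF f v (E'.erase y)
      = ∑ σ : Finset C, (v σ : ℝ) * ∑ y ∈ E, f ((σ ∩ E'.erase y).card) := by
    unfold thieleF
    rw [Finset.sum_comm]
    exact Finset.sum_congr rfl fun σ _ => (Finset.mul_sum _ _ _).symm
  have hle : ∑ y ∈ E, thieleF f v (E'.erase y) ≤ (M:ℝ) * thieleF f v E := by
    calc ∑ y ∈ E, thieleF f v (E'.erase y) ≤ ∑ y ∈ E, thieleF f v E :=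
          Finset.sum_le_sum fun y hy => hopt _ (hTcard y hy)
      _ = (M:ℝ) * thieleF f v E := by rw [Finset.sum_const, hcard, nsmul_eq_mul]
  have hge : (M:ℝ) * thieleF f v E
      + ((M:ℝ) * ∑ σ : Finset C, (v σ : ℝ) * (if 0 < g σ then 1 else 0)
         - ∑ σ : Finset C, (v σ : ℝ) * (if 1 ≤ (σ ∩ E).card then 1 else 0))
      ≤ ∑ y ∈ E, thieleF f v (E'.erase y) := by
    rw [hswap]
    have hpt : ∑ σ : Finset C, (v σ : ℝ) *
        ((M:ℝ) * f ((σ ∩ E).card)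
          + ((M:ℝ) * (if 0 < g σ then 1 else 0) - (if 1 ≤ (σ ∩ E).card then 1 else 0)))
        ≤ ∑ σ : Finset C, (v σ : ℝ) * ∑ y ∈ E, f ((σ ∩ E'.erase y).card) :=
      Finset.sum_le_sum fun σ _ =>
        mul_le_mul_of_nonneg_left (hkey σ) (Nat.cast_nonneg _)
    refine le_trans (le_of_eq ?_) hpt
    unfold thieleF
    rw [Finset.mul_sum, Finset.mul_sum, ← Finset.sum_sub_distrib, ← Finset.sum_add_distrib]
    exact Finset.sum_congr rfl fun σ _ => by ring
  have h1 : (↑(∑ σ : Finset C, g σ) : ℝ)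
      ≤ ∑ σ : Finset C, (v σ : ℝ) * (if 0 < g σ then 1 else 0) := by
    push_cast
    apply Finset.sum_le_sum
    intro σ _
    by_cases hgs : 0 < g σ
    · rw [if_pos hgs, mul_one]
      exact_mod_cast hg σ
    · rw [if_neg hgs, mul_zero]
      have : g σ = 0 := by omega
      rw [this]; norm_num
  have h2 : ∑ σ : Finset C, (v σ : ℝ) * (if 1 ≤ (σ ∩ E).card then 1 else 0)
      ≤ (↑(∑ σ : Finset C, v σ) : ℝ) - ∑ σ : Finset C, (v σ : ℝ) * (if 0 < g σ then 1 else 0) := by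
    push_cast
    rw [← Finset.sum_sub_distrib]
    apply Finset.sum_le_sum
    intro σ _
    by_cases hgs : 0 < g σ
    · have he0 : (σ ∩ E).card = 0 := by rw [hdisj σ hgs]; simp
      rw [if_pos hgs, he0]
      norm_num
    · rw [if_neg hgs, mul_zero, sub_zero]
      split_ifs
      · norm_num
      · rw [mul_zero]
        positivity
  -- conclude
  have hGpos : (0:ℝ) < ↑(∑ σ : Finset C, g σ) := by exact_mod_cast hG
  have hVle : (↑(∑ σ : Finset C, v σ) : ℝ) ≤ (M:ℝ) * ↑(∑ σ : Finset C, g σ) := by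
    exact_mod_cast hVG'
  linarith [hge, hle, h1, h2,
    mul_le_mul_of_nonneg_left h1 (by positivity : (0:ℝ) ≤ (M:ℝ))]

set_option maxHeartbeats 1000000 in
lemma necessity_aux (w : ℕ → ℝ) (hw1 : w 1 = 1) (hw : ∀ k, 0 ≤ w k)
    (j a b : ℕ) (hj : 2 ≤ j) (ha : 0 < a) (hb : 0 < b)
    (hba : b + 1 ≤ a * j) (hab : (a : ℝ) ≤ (b : ℝ) * w j)
    (H : ∀ (C : Type) [Fintype C] [DecidableEq C] (v : Finset C → ℕ) (M : ℕ)
        (E : Finset C), v ∅ = 0 → 1 ≤ M → M ≤ Fintype.card C →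
        0 < ∑ σ : Finset C, v σ →
        ThieleOptOutcome (fromWeights w) v M E → ProvidesJR v M E) : False := by
  set f := fromWeights w with hfdef
  have hf0 : f 0 = 0 := fW_zero w
  have hf1 : f 1 = 1 := fW_one w hw1
  have hfnn : ∀ n, 0 ≤ f n := fW_nonneg w hw
  have hfmono : ∀ {m n : ℕ}, m ≤ n → f m ≤ f n := fun h => fW_mono w hw h
  have hfpred : ∀ n, 1 ≤ n → f (n - 1) = f n - w n := fun n h => fW_pred w n h
  let C : Type := (Fin a × Fin j) ⊕ Unit
  let x : C := Sum.inr ()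
  let X : Finset C := {x}
  let Grp : Fin a → Finset C := fun i => Finset.univ.image (fun t : Fin j => Sum.inl (i, t))
  have hGmem : ∀ (i : Fin a) (z : C), z ∈ Grp i ↔ ∃ t : Fin j, Sum.inl (i, t) = z := by
    intro i z; simp [Grp]
  have hGcard : ∀ i, (Grp i).card = j := by
    intro i
    rw [Finset.card_image_of_injective _ (fun t1 t2 h => congrArg Prod.snd (Sum.inl_injective h))]
    simp
  have hxG : ∀ i, x ∉ Grp i := by
    intro i h
    rw [hGmem] at h
    obtain ⟨t, ht⟩ := h
    simp [x] at ht
  have hGX : ∀ i, Grp i ≠ X := by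
    intro i h
    have : x ∈ Grp i := by rw [h]; simp [X]
    exact hxG i this
  have hGne : ∀ i, Grp i ≠ ∅ := by
    intro i h
    have : Sum.inl (i, (⟨0, by omega⟩ : Fin j)) ∈ Grp i := by
      rw [hGmem]; exact ⟨_, rfl⟩
    rw [h] at this
    exact absurd this (Finset.notMem_empty _)
  set v : Finset C → ℕ :=
    fun σ => (if σ = X then a else 0) + b * (Finset.univ.filter (fun i => Grp i = σ)).card
    with hvdef
  have hXne : (∅ : Finset C) ≠ X := by
    intro h
    have : x ∈ (∅ : Finset C) := by rw [h]; simp [X]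
    exact absurd this (Finset.notMem_empty _)
  have hvempty : v ∅ = 0 := by
    rw [hvdef]
    simp only [if_neg hXne]
    have : (Finset.univ.filter (fun i => Grp i = (∅ : Finset C))) = ∅ :=
      Finset.filter_eq_empty_iff.mpr (fun i _ => hGne i)
    rw [this]
    simp
  -- fiberwise sums
  have hfibN : ∑ σ : Finset C, (Finset.univ.filter (fun i => Grp i = σ)).card = a := by
    have := Finset.card_eq_sum_card_fiberwise
      (f := Grp) (s := Finset.univ) (t := Finset.univ) (fun i _ => Finset.mem_univ _)
    simp only [Finset.card_univ, Fintype.card_fin] at this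
    exact this.symm
  have hfibR : ∀ F : Finset C → ℝ,
      ∑ σ : Finset C, ((Finset.univ.filter (fun i => Grp i = σ)).card : ℝ) * F σ
        = ∑ i : Fin a, F (Grp i) := by
    intro F
    have h1 := Finset.sum_fiberwise_of_maps_to
      (g := Grp) (s := Finset.univ) (t := Finset.univ)
      (fun i _ => Finset.mem_univ _) (fun i => F (Grp i))
    rw [← h1]
    apply Finset.sum_congr rfl
    intro σ _
    rw [Finset.sum_congr rfl (fun i hi => by
        rw [(Finset.mem_filter.mp hi).2])]
    rw [Finset.sum_const, nsmul_eq_mul]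
  have hvsum : ∑ σ : Finset C, v σ = a + b * a := by
    rw [hvdef]
    rw [Finset.sum_add_distrib]
    congr 1
    · rw [Finset.sum_ite_eq' Finset.univ X (fun _ => a), if_pos (Finset.mem_univ X)]
    · rw [← Finset.mul_sum, hfibN]
  -- thieleF formula
  have hTF : ∀ T : Finset C, thieleF f v T
      = (a : ℝ) * f ((X ∩ T).card) + (b : ℝ) * ∑ i : Fin a, f ((Grp i ∩ T).card) := by
    intro T
    unfold thieleF
    rw [hvdef]
    have : ∀ σ : Finset C,
        ((((if σ = X then a else 0) + b * (Finset.univ.filter (fun i => Grp i = σ)).card : ℕ)) : ℝ)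
          * f ((σ ∩ T).card)
        = (if σ = X then (a:ℝ) * f ((σ ∩ T).card) else 0)
          + (b:ℝ) * (((Finset.univ.filter (fun i => Grp i = σ)).card : ℝ) * f ((σ ∩ T).card)) := by
      intro σ
      push_cast
      split_ifs <;> ring
    rw [Finset.sum_congr rfl (fun σ _ => this σ), Finset.sum_add_distrib]
    congr 1
    · rw [Finset.sum_ite_eq' Finset.univ X (fun σ => (a:ℝ) * f ((σ ∩ T).card)),
        if_pos (Finset.mem_univ X)]
    · rw [← Finset.mul_sum, hfibR (fun σ => f ((σ ∩ T).card))]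
  set W : Finset C := Finset.univ.image (fun p : Fin a × Fin j => Sum.inl p) with hWdef
  have hWmem : ∀ z : C, z ∈ W ↔ ∃ p : Fin a × Fin j, Sum.inl p = z := by
    intro z
    rw [hWdef, Finset.mem_image]
    constructor
    · rintro ⟨p, _, hp⟩; exact ⟨p, hp⟩
    · rintro ⟨p, hp⟩; exact ⟨p, Finset.mem_univ p, hp⟩
  have hWcard : W.card = a * j := by
    rw [hWdef, Finset.card_image_of_injective _ Sum.inl_injective]
    simp
  have hxW : x ∉ W := by
    intro h
    rw [hWmem] at h
    obtain ⟨p, hp⟩ := h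
    simp [x] at hp
  have hGW : ∀ i, Grp i ∩ W = Grp i := by
    intro i
    apply Finset.inter_eq_left.mpr
    intro z hz
    rw [hGmem] at hz
    obtain ⟨t, rfl⟩ := hz
    rw [hWmem]
    exact ⟨(i, t), rfl⟩
  have hXW : (X ∩ W).card = 0 := by
    rw [Finset.card_eq_zero]
    apply Finset.eq_empty_of_forall_notMem
    intro z hz
    obtain ⟨hz1, hz2⟩ := Finset.mem_inter.mp hz
    rw [Finset.mem_singleton.mp hz1] at hz2
    exact hxW hz2
  have hFW : thieleF f v W = (b : ℝ) * ((a : ℝ) * f j) := by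
    rw [hTF, hXW, hf0]
    simp only [hGW, hGcard]
    rw [Finset.sum_const, Finset.card_univ, Fintype.card_fin, nsmul_eq_mul]
    ring
  -- optimality of W
  have hopt : ∀ T : Finset C, T.card = a * j → thieleF f v T ≤ thieleF f v W := by
    intro T hT
    rw [hTF, hFW]
    by_cases hxT : x ∈ T
    · -- pigeonhole: some group not fully in T
      have hXT : (X ∩ T).card = 1 := by
        have : X ∩ T = X := Finset.inter_eq_left.mpr (by
          intro z hz
          rw [Finset.mem_singleton.mp hz]
          exact hxT)
        rw [this]
        simp [X]
      obtain ⟨i0, hi0⟩ : ∃ i0 : Fin a, (Grp i0 ∩ T).card < j := by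
        by_contra h
        push_neg at h
        have hsub : ∀ i, Grp i ⊆ T := by
          intro i
          have hle : (Grp i).card ≤ (Grp i ∩ T).card := by
            rw [hGcard]; exact h i
          have := Finset.eq_of_subset_of_card_le Finset.inter_subset_left hle
          rw [← this]
          exact Finset.inter_subset_right
        have hins : insert x W ⊆ T := by
          intro z hz
          rcases Finset.mem_insert.mp hz with rfl | hzW
          · exact hxT
          · rw [hWmem] at hzW
            obtain ⟨⟨i, t⟩, rfl⟩ := hzW
            apply hsub i
            rw [hGmem]
            exact ⟨t, rfl⟩
        have := Finset.card_le_card hins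
        rw [Finset.card_insert_of_notMem hxW, hWcard, hT] at this
        omega
      have hsplit : ∑ i : Fin a, f ((Grp i ∩ T).card)
          = f ((Grp i0 ∩ T).card) + ∑ i ∈ Finset.univ.erase i0, f ((Grp i ∩ T).card) := by
        rw [← Finset.sum_erase_add Finset.univ _ (Finset.mem_univ i0)]
        ring
      have hrest : ∑ i ∈ Finset.univ.erase i0, f ((Grp i ∩ T).card)
          ≤ ((a - 1 : ℕ) : ℝ) * f j := by
        calc ∑ i ∈ Finset.univ.erase i0, f ((Grp i ∩ T).card)
            ≤ ∑ i ∈ Finset.univ.erase i0, f j := by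
              apply Finset.sum_le_sum
              intro i _
              apply hfmono
              calc (Grp i ∩ T).card ≤ (Grp i).card :=
                    Finset.card_le_card Finset.inter_subset_left
                _ = j := hGcard i
          _ = ((a - 1 : ℕ) : ℝ) * f j := by
              rw [Finset.sum_const, Finset.card_erase_of_mem (Finset.mem_univ i0),
                Finset.card_univ, Fintype.card_fin, nsmul_eq_mul]
      have hi0f : f ((Grp i0 ∩ T).card) ≤ f j - w j := by
        calc f ((Grp i0 ∩ T).card) ≤ f (j - 1) := hfmono (by omega)
          _ = f j - w j := hfpred j (by omega)
      have hcast : ((a - 1 : ℕ) : ℝ) = (a : ℝ) - 1 := by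
        rw [Nat.cast_sub ha]
        norm_num
      rw [hXT, hf1]
      have hbr : (0:ℝ) ≤ (b:ℝ) := Nat.cast_nonneg b
      have hS : ∑ i : Fin a, f ((Grp i ∩ T).card) ≤ ((a:ℝ) - 1) * f j + (f j - w j) := by
        rw [hsplit]
        rw [hcast] at hrest
        linarith
      have hbS := mul_le_mul_of_nonneg_left hS hbr
      nlinarith [hbS, hab]
    · have hXT : (X ∩ T).card = 0 := by
        rw [Finset.card_eq_zero]
        apply Finset.eq_empty_of_forall_notMem
        intro z hz
        obtain ⟨hz1, hz2⟩ := Finset.mem_inter.mp hz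
        rw [Finset.mem_singleton.mp hz1] at hz2
        exact hxT hz2
      rw [hXT, hf0, mul_zero, zero_add]
      apply mul_le_mul_of_nonneg_left _ (Nat.cast_nonneg b)
      calc ∑ i : Fin a, f ((Grp i ∩ T).card) ≤ ∑ i : Fin a, f j := by
            apply Finset.sum_le_sum
            intro i _
            apply hfmono
            calc (Grp i ∩ T).card ≤ (Grp i).card :=
                  Finset.card_le_card Finset.inter_subset_left
              _ = j := hGcard i
        _ = (a : ℝ) * f j := by
            rw [Finset.sum_const, Finset.card_univ, Fintype.card_fin, nsmul_eq_mul]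
  -- invoke the hypothesis
  have hcardC : Fintype.card C = a * j + 1 := by
    simp [C]
  have hJR : ProvidesJR v (a * j) W := by
    apply H C v (a * j) W hvempty
    · have : 1 ≤ a ∧ 1 ≤ j := ⟨ha, by omega⟩
      exact Nat.one_le_iff_ne_zero.mpr (by positivity)
    · omega
    · rw [hvsum]; positivity
    · exact ⟨hWcard, hopt⟩
  -- the violating group
  set g : Finset C → ℕ := fun σ => if σ = X then a else 0 with hgdef
  have hgsum : ∑ σ : Finset C, g σ = a := by
    rw [hgdef]
    rw [Finset.sum_ite_eq' Finset.univ X (fun _ => a), if_pos (Finset.mem_univ X)]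
  have := hJR g
    (fun σ => by rw [hgdef, hvdef]; exact Nat.le_add_right _ _)
    (by
      have h1 : ∑ σ : Finset C, (v σ : ℚ) = ((a + b * a : ℕ) : ℚ) := by
        rw [← hvsum]
        push_cast
        rfl
      have h2 : ∑ σ : Finset C, (g σ : ℚ) = ((∑ σ : Finset C, g σ : ℕ) : ℚ) := by
        push_cast
        rfl
      rw [hgsum] at h2
      rw [h1, h2]
      have : (a + b * a : ℕ) ≤ (a * j) * a := by
        calc a + b * a = a * (1 + b) := by ring
          _ ≤ a * (a * j) := Nat.mul_le_mul_left a (by omega)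
          _ = (a * j) * a := by ring
      exact_mod_cast this)
    ⟨x, fun σ hσ => by
      simp only [hgdef] at hσ
      by_cases h : σ = X
      · rw [h]; simp [X]
      · rw [if_neg h] at hσ; omega⟩
  obtain ⟨c, hcW, σ, hσ, hcσ⟩ := this
  simp only [hgdef] at hσ
  by_cases h : σ = X
  · rw [h] at hcσ
    rw [Finset.mem_singleton.mp hcσ] at hcW
    exact hxW hcW
  · rw [if_neg h] at hσ; omega

/-- Let `w` be weights with `w 1 = 1` and `w k ≥ 0`.  Thiele's optimization method
with satisfaction function `f(n) = Σ_{k=1}^n w_k` satisfies JR (every possible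
outcome on every profile provides JR) if and only if `w j ≤ 1/j` for every
`j > 1`. -/
theorem stmt_17 (w : ℕ → ℝ) (hw1 : w 1 = 1) (hw : ∀ k, 0 ≤ w k) :
    (∀ (C : Type) [Fintype C] [DecidableEq C] (v : Finset C → ℕ) (M : ℕ)
        (E : Finset C), v ∅ = 0 → 1 ≤ M → M ≤ Fintype.card C →
        0 < ∑ σ : Finset C, v σ →
        ThieleOptOutcome (fromWeights w) v M E → ProvidesJR v M E)
    ↔ (∀ j : ℕ, 1 < j → w j ≤ 1 / (j : ℝ)) := by
  constructor
  · intro H j hj1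
    by_contra hwj
    push_neg at hwj
    have hjR : (0:ℝ) < (j:ℝ) := by exact_mod_cast (by omega : 0 < j)
    obtain ⟨q, hq1, hq2⟩ := exists_rat_btwn hwj
    have hqpos : 0 < q := by
      have : (0:ℝ) < (q:ℝ) := lt_trans (by positivity) hq1
      exact_mod_cast this
    set a : ℕ := q.num.toNat with hadef
    set b : ℕ := q.den with hbdef
    have ha : 0 < a := by
      rw [hadef]
      have := Rat.num_pos.mpr hqpos
      omega
    have hb : 0 < b := q.pos
    have hkey : ((a : ℚ) : ℝ) / ((b : ℚ) : ℝ) = (q : ℝ) := by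
      have h1 : (a : ℚ) = (q.num : ℚ) := by
        rw [hadef]
        exact_mod_cast Int.toNat_of_nonneg (le_of_lt (Rat.num_pos.mpr hqpos))
      have h2 : ((q.num : ℚ) : ℝ) / ((q.den : ℚ) : ℝ) = ((q.num : ℚ) / (q.den : ℚ) : ℚ) := by
        push_cast
        ring
      rw [h1, hbdef, h2, Rat.num_div_den]
    have hbR : (0:ℝ) < ((b : ℚ) : ℝ) := by
      have : (0:ℚ) < (b:ℚ) := by exact_mod_cast hb
      exact_mod_cast this
    have hba : b + 1 ≤ a * j := by
      have h3 : 1 / (j:ℝ) < ((a : ℚ) : ℝ) / ((b : ℚ) : ℝ) := by rw [hkey]; exact hq1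
      have h4 : ((b : ℚ) : ℝ) < ((a : ℚ) : ℝ) * (j:ℝ) := by
        rw [div_lt_div_iff₀ hjR hbR] at h3
        linarith
      have h5 : (b : ℕ) < a * j := by exact_mod_cast h4
      omega
    have hab : (a : ℝ) ≤ (b : ℝ) * w j := by
      have h3 : ((a : ℚ) : ℝ) / ((b : ℚ) : ℝ) < w j := by rw [hkey]; exact hq2
      rw [div_lt_iff₀ hbR] at h3
      have : ((a:ℚ):ℝ) ≤ w j * ((b:ℚ):ℝ) := le_of_lt h3
      push_cast at this ⊢
      linarith
    exact necessity_aux w hw1 hw j a b (by omega) ha hb hba hab H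
  · intro hj C _ _ v M E _ _ _ hV hopt
    exact sufficiency w hw1 hw hj v M E hV hopt
end

section
/- In the party list case, where each elected candidate's unit load is divided equally among the ballots of its party (so that each of the v_j ballots of party j carries load m_j/v_j when party j has m_j elected candidates), the least squares optimization criterion yields Sainte-Laguë's method: a vector (m_1,…,m_p) of nonnegative integers with Σ_j m_j = M minimizes the total sum of squared ballot loads Σ_j v_j·(m_j/v_j)² = Σ_j m_j²/v_j among all such vectors if and only if (m_1,…,m_p) is a Sainte-Laguë allocation of M seats to the vote totals v_1,…,v_p. -/
open Finset

/-- `m` is a Sainte-Laguë allocation of `M` seats to the vote totals `v`: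
`Σ_j m_j = M` and `v_j/(2m_j+1) ≤ v_k/(2m_k−1)` for all `j, k` with `m_k ≥ 1`. -/
def IsSainteLague {p : ℕ} (v : Fin p → ℕ) (M : ℕ) (m : Fin p → ℕ) : Prop :=
  (∑ j, m j) = M ∧
  ∀ j k : Fin p, 1 ≤ m k →
    (v j : ℚ) / (2 * (m j : ℚ) + 1) ≤ (v k : ℚ) / (2 * (m k : ℚ) - 1)

/-- Per-party exchange inequality. -/
lemma term_ineq (a b : ℕ) (v t : ℚ) (hv : 0 < v)
    (h1 : t ≤ (2 * (a : ℚ) + 1) / v)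
    (h2 : 1 ≤ a → (2 * (a : ℚ) - 1) / v ≤ t) :
    t * ((b : ℚ) - (a : ℚ)) ≤ ((b : ℚ) ^ 2 - (a : ℚ) ^ 2) / v := by
  rw [le_div_iff₀ hv]
  rw [le_div_iff₀ hv] at h1
  rcases le_or_gt a b with hab | hab
  · obtain ⟨n, rfl⟩ := Nat.exists_eq_add_of_le hab
    have hn : (n : ℚ) ≤ (n : ℚ) ^ 2 := by
      exact_mod_cast Nat.le_self_pow two_ne_zero n
    have hn0 : (0 : ℚ) ≤ n := Nat.cast_nonneg n
    push_cast
    nlinarith [mul_le_mul_of_nonneg_right h1 hn0]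
  · have ha : 1 ≤ a := by omega
    have h2' := h2 ha
    rw [div_le_iff₀ hv] at h2'
    have h3 : (b : ℚ) + 1 ≤ a := by exact_mod_cast hab
    have h4 : (0 : ℚ) ≤ b := Nat.cast_nonneg b
    nlinarith [mul_nonneg (by linarith : (0:ℚ) ≤ (a:ℚ) - b - 1) (by linarith : (0:ℚ) ≤ (a:ℚ) - b),
      mul_nonneg (by linarith : (0:ℚ) ≤ t * v - (2 * (a:ℚ) - 1)) (by linarith : (0:ℚ) ≤ (a:ℚ) - b)]

/-- If `t` separates the Sainte-Laguë quotients, `m` minimizes the cost. -/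
lemma min_of_bounds {p : ℕ} (v : Fin p → ℕ) (hv : ∀ j, 0 < v j) (m m' : Fin p → ℕ) (t : ℚ)
    (h1 : ∀ j, t ≤ (2 * (m j : ℚ) + 1) / (v j : ℚ))
    (h2 : ∀ j, 1 ≤ m j → (2 * (m j : ℚ) - 1) / (v j : ℚ) ≤ t)
    (hsum : (∑ j, m' j) = ∑ j, m j) :
    (∑ j, (m j : ℚ) ^ 2 / (v j : ℚ)) ≤ ∑ j, (m' j : ℚ) ^ 2 / (v j : ℚ) := by
  have key : ∀ j, t * ((m' j : ℚ) - (m j : ℚ)) ≤ ((m' j : ℚ) ^ 2 - (m j : ℚ) ^ 2) / (v j : ℚ) :=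
    fun j => term_ineq (m j) (m' j) _ t (by exact_mod_cast hv j) (h1 j) (h2 j)
  have hs := Finset.sum_le_sum (fun j (_ : j ∈ univ) => key j)
  have hL : (∑ j, t * ((m' j : ℚ) - (m j : ℚ))) = 0 := by
    rw [← Finset.mul_sum, Finset.sum_sub_distrib]
    have hc : (∑ j, (m' j : ℚ)) = ∑ j, (m j : ℚ) := by exact_mod_cast hsum
    rw [hc]; ring
  have hR : (∑ j, ((m' j : ℚ) ^ 2 - (m j : ℚ) ^ 2) / (v j : ℚ))
      = (∑ j, (m' j : ℚ) ^ 2 / (v j : ℚ)) - ∑ j, (m j : ℚ) ^ 2 / (v j : ℚ) := by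
    rw [← Finset.sum_sub_distrib]
    exact Finset.sum_congr rfl (fun j _ => by ring)
  rw [hL, hR] at hs
  linarith

/-- In the party list case with equally divided loads (each of the `v j` ballots of
party `j` carries load `m j / v j`), a seat vector `m` with `Σ_j m_j = M` minimizes
the total sum of squared ballot loads `Σ_j m_j²/v_j` among all such vectors if and
only if `m` is a Sainte-Laguë allocation of `M` seats to `v`. -/
theorem stmt_18 (p M : ℕ) (v : Fin p → ℕ) (hv : ∀ j, 0 < v j) (m : Fin p → ℕ) :
    ((∑ j, m j) = M ∧
      ∀ m' : Fin p → ℕ, (∑ j, m' j) = M →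
        (∑ j, (m j : ℚ) ^ 2 / (v j : ℚ)) ≤ ∑ j, (m' j : ℚ) ^ 2 / (v j : ℚ))
    ↔ IsSainteLague v M m := by
  constructor
  · rintro ⟨hsum, hmin⟩
    refine ⟨hsum, fun j k hk => ?_⟩
    have hvj : (0 : ℚ) < v j := by exact_mod_cast hv j
    have hvk : (0 : ℚ) < v k := by exact_mod_cast hv k
    have hmk : (1 : ℚ) ≤ m k := by exact_mod_cast hk
    by_cases hjk : j = k
    · subst hjk
      rw [div_le_div_iff₀ (by linarith) (by linarith)]
      nlinarith
    · set m' : Fin p → ℕ := fun x => if x = j then m j + 1 else if x = k then m k - 1 else m x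
        with hm'
      have hpt : ∀ x, m' x + (if x = k then 1 else 0) = m x + (if x = j then 1 else 0) := by
        intro x
        by_cases hxj : x = j <;> by_cases hxk : x = k <;>
          simp only [hm', hxj, hxk, if_true, if_false, if_neg, ite_true, ite_false] <;>
          simp_all <;> omega
      have hsum' : (∑ x, m' x) = M := by
        have hcong : (∑ x, (m' x + if x = k then 1 else 0))
            = ∑ x, (m x + if x = j then 1 else 0) :=
          Finset.sum_congr rfl (fun x _ => hpt x)
        rw [Finset.sum_add_distrib, Finset.sum_add_distrib] at hcong
        simp only [Finset.sum_ite_eq', Finset.mem_univ, if_true] at hcong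
        omega
      have hmin' := hmin m' hsum'
      have hdiff : ∀ x, x ≠ j → x ≠ k → m' x = m x := by
        intro x h h'; simp [hm', h, h']
      have hsplit : (∑ x, ((m' x : ℚ) ^ 2 / (v x : ℚ) - (m x : ℚ) ^ 2 / (v x : ℚ)))
          = ((m' j : ℚ) ^ 2 / (v j : ℚ) - (m j : ℚ) ^ 2 / (v j : ℚ))
            + ((m' k : ℚ) ^ 2 / (v k : ℚ) - (m k : ℚ) ^ 2 / (v k : ℚ)) := by
        rw [← Finset.sum_pair (f := fun x => (m' x : ℚ) ^ 2 / (v x : ℚ) - (m x : ℚ) ^ 2 / (v x : ℚ)) hjk]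
        refine (Finset.sum_subset (Finset.subset_univ _) ?_).symm
        intro x _ hx
        simp only [Finset.mem_insert, Finset.mem_singleton, not_or] at hx
        rw [hdiff x hx.1 hx.2]; ring
      have h0 : (0 : ℚ) ≤ ∑ x, ((m' x : ℚ) ^ 2 / (v x : ℚ) - (m x : ℚ) ^ 2 / (v x : ℚ)) := by
        rw [Finset.sum_sub_distrib]; linarith
      rw [hsplit] at h0
      have cj : (m' j : ℚ) = (m j : ℚ) + 1 := by simp [hm']
      have ck : (m' k : ℚ) = (m k : ℚ) - 1 := by
        have : m' k = m k - 1 := by simp [hm', Ne.symm hjk]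
        rw [this, Nat.cast_sub hk]; norm_num
      rw [cj, ck] at h0
      have h0' : (2 * (m k : ℚ) - 1) / (v k : ℚ) ≤ (2 * (m j : ℚ) + 1) / (v j : ℚ) := by
        have e : (((m j : ℚ) + 1) ^ 2 / (v j : ℚ) - (m j : ℚ) ^ 2 / (v j : ℚ))
            + (((m k : ℚ) - 1) ^ 2 / (v k : ℚ) - (m k : ℚ) ^ 2 / (v k : ℚ))
            = (2 * (m j : ℚ) + 1) / (v j : ℚ) - (2 * (m k : ℚ) - 1) / (v k : ℚ) := by
          field_simp; ring
        rw [e] at h0; linarith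
      rw [div_le_div_iff₀ (by linarith) (by linarith)]
      rw [div_le_div_iff₀ hvk hvj] at h0'
      nlinarith
  · rintro ⟨hsum, hSL⟩
    refine ⟨hsum, fun m' hsum' => ?_⟩
    set s : Finset (Fin p) := univ.filter (fun k => 1 ≤ m k) with hsdef
    by_cases hs : s.Nonempty
    · set t : ℚ := s.sup' hs (fun k => (2 * (m k : ℚ) - 1) / (v k : ℚ)) with ht
      refine min_of_bounds v hv m m' t ?_ ?_ (hsum'.trans hsum.symm)
      · intro j
        have hvj : (0 : ℚ) < v j := by exact_mod_cast hv j
        rw [ht, Finset.sup'_le_iff]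
        intro k hk
        have hk1 : 1 ≤ m k := (Finset.mem_filter.mp hk).2
        have hvk : (0 : ℚ) < v k := by exact_mod_cast hv k
        have hmk : (1 : ℚ) ≤ m k := by exact_mod_cast hk1
        have h := hSL j k hk1
        rw [div_le_div_iff₀ (by linarith) (by linarith)] at h
        rw [div_le_div_iff₀ hvk hvj]
        nlinarith
      · intro j hj
        rw [ht]
        exact Finset.le_sup' (fun k => (2 * (m k : ℚ) - 1) / (v k : ℚ))
          (by simp [hsdef, hj] : j ∈ s)
    · refine min_of_bounds v hv m m' 0 ?_ ?_ (hsum'.trans hsum.symm)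
      · intro j
        have hvj : (0 : ℚ) < v j := by exact_mod_cast hv j
        positivity
      · intro j hj
        exact absurd ⟨j, by simp [hsdef, hj]⟩ hs
end

section
/- In the party list case, where each elected candidate's unit load is divided equally among the ballots of its party (so that each of the v_j ballots of party j carries load m_j/v_j when party j has m_j elected candidates), D'Hondt allocations minimize the maximum ballot load: if (m_1,…,m_p) is a D'Hondt allocation of M seats to v_1,…,v_p, then for every vector (m′_1,…,m′_p) of nonnegative integers with Σ_j m′_j = M, one has max_j m_j/v_j ≤ max_j m′_j/v_j. -/
open Finset

/-- `m` is a D'Hondt allocation of `M` seats to the vote totals `v`: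
`Σ_j m_j = M` and `v_j/(m_j+1) ≤ v_k/m_k` for all `j, k` with `m_k ≥ 1`. -/
def IsDHondt {p : ℕ} (v : Fin p → ℕ) (M : ℕ) (m : Fin p → ℕ) : Prop :=
  (∑ j, m j) = M ∧
  ∀ j k : Fin p, 1 ≤ m k → (v j : ℚ) / ((m j : ℚ) + 1) ≤ (v k : ℚ) / (m k : ℚ)

/-- In the party list case with equally divided loads (each of the `v j` ballots of
party `j` carries load `m j / v j`), D'Hondt allocations minimize the maximum ballot
load: if `m` is a D'Hondt allocation of `M` seats to `v`, then for every seat vector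
`m'` with `Σ_j m'_j = M` the maximum load under `m` is at most that under `m'`. -/
theorem stmt_19 (p M : ℕ) (hp : 0 < p) (v : Fin p → ℕ) (hv : ∀ j, 0 < v j)
    (m : Fin p → ℕ) (hm : IsDHondt v M m) :
    ∀ m' : Fin p → ℕ, (∑ j, m' j) = M →
      (Finset.univ.sup'
          (Finset.univ_nonempty_iff.mpr (Fin.pos_iff_nonempty.mp hp))
          fun j => (m j : ℚ) / (v j : ℚ)) ≤
        Finset.univ.sup'
          (Finset.univ_nonempty_iff.mpr (Fin.pos_iff_nonempty.mp hp))
          fun j => (m' j : ℚ) / (v j : ℚ) := by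
  intro m' hm'
  by_contra h
  push_neg at h
  set ne : (Finset.univ : Finset (Fin p)).Nonempty :=
    Finset.univ_nonempty_iff.mpr (Fin.pos_iff_nonempty.mp hp)
  obtain ⟨k, -, hk⟩ := Finset.exists_mem_eq_sup' ne fun j => (m j : ℚ) / (v j : ℚ)
  rw [hk] at h
  have hvpos : ∀ j, (0 : ℚ) < v j := fun j => by exact_mod_cast hv j
  have hsup0 : (0 : ℚ) ≤ Finset.univ.sup' ne fun j => (m' j : ℚ) / (v j : ℚ) := by
    refine le_trans ?_ (Finset.le_sup' _ (Finset.mem_univ k))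
    positivity
  have hmk : 1 ≤ m k := by
    by_contra hmk0
    have : m k = 0 := by omega
    rw [this] at h
    simp only [Nat.cast_zero, zero_div] at h
    linarith
  have hmkQ : (0 : ℚ) < m k := by exact_mod_cast hmk
  -- each m' j ≤ m j, and m' k < m k
  have key : ∀ j, (m' j : ℚ) / v j < ((m j : ℚ) + 1) / v j := by
    intro j
    have h1 : (m' j : ℚ) / v j ≤ Finset.univ.sup' ne fun j => (m' j : ℚ) / (v j : ℚ) :=
      Finset.le_sup' (fun j => (m' j : ℚ) / (v j : ℚ)) (Finset.mem_univ j)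
    have h2 := hm.2 j k hmk
    have h3 : (m k : ℚ) / v k ≤ ((m j : ℚ) + 1) / v j := by
      rw [div_le_div_iff₀ (by positivity) hmkQ] at h2
      rw [div_le_div_iff₀ (hvpos k) (hvpos j)]
      linarith [h2]
    linarith
  have hle : ∀ j, m' j ≤ m j := by
    intro j
    have := (div_lt_div_iff_of_pos_right (hvpos j)).mp (key j)
    have : (m' j : ℚ) < (m j : ℚ) + 1 := this
    exact_mod_cast Nat.lt_succ_iff.mp (by exact_mod_cast this)
  have hlt : m' k < m k := by
    have hk' : (m' k : ℚ) / v k < (m k : ℚ) / v k := by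
      have h1 : (m' k : ℚ) / v k ≤ Finset.univ.sup' ne fun j => (m' j : ℚ) / (v j : ℚ) :=
        Finset.le_sup' (fun j => (m' j : ℚ) / (v j : ℚ)) (Finset.mem_univ k)
      linarith
    have := (div_lt_div_iff_of_pos_right (hvpos k)).mp hk'
    exact_mod_cast this
  have : (∑ j, m' j) < ∑ j, m j :=
    Finset.sum_lt_sum (fun j _ => hle j) ⟨k, Finset.mem_univ k, hlt⟩
  rw [hm.1, hm'] at this
  exact lt_irrefl _ this
end
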